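/- Suppose y^n ∈ X satisfies the optimality condition ∇H^n(y^n) − ∇F^n(u^n) + M(y^n − u^n) = 0 and δt < 2/(3L). Then with d^n = y^n − u^n, ⟨∇E^n(y^n), d^n⟩ ≤ −(2/(3δt) − L)‖d^n‖² − ‖d^n‖_M², i.e., ⟨∇E^n(y^n), d^n⟩ ≤ −‖d^n‖²_{N₂} with N₂ = (2/(3δt) − L)I + M; in particular d^n is a descent direction of E^n at y^n when d^n ≠ 0. -/

import Mathlib

/-!
By the optimality condition, `∇Hⁿ(yⁿ) = ∇Fⁿ(uⁿ) - M dⁿ`, so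
`∇Eⁿ(yⁿ) = ∇Fⁿ(uⁿ) - ∇Fⁿ(yⁿ) - M dⁿ = -(2/(3δt)) dⁿ + (f yⁿ - f uⁿ) - M dⁿ`:
the quadratic part of `Fⁿ` contributes `-(2/(3δt)) dⁿ` and its linear part cancels.
Pairing with `dⁿ`, Cauchy–Schwarz and the Lipschitz bound give `⟪f yⁿ - f uⁿ, dⁿ⟫ ≤ L ‖dⁿ‖²`.
-/

open scoped RealInnerProductSpace
open InnerProductSpace

section RCLike

variable {𝕜 F : Type*} [RCLike 𝕜] [NormedAddCommGroup F] [InnerProductSpace 𝕜 F] [CompleteSpace F]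
  {f g : F → 𝕜} {f' g' x : F}

theorem HasGradientAt.add (hf : HasGradientAt f f' x) (hg : HasGradientAt g g' x) :
    HasGradientAt (fun u => f u + g u) (f' + g') x := by
  rw [hasGradientAt_iff_hasFDerivAt, map_add]
  exact hf.hasFDerivAt.add hg.hasFDerivAt

theorem HasGradientAt.sub (hf : HasGradientAt f f' x) (hg : HasGradientAt g g' x) :
    HasGradientAt (fun u => f u - g u) (f' - g') x := by
  rw [hasGradientAt_iff_hasFDerivAt, map_sub]
  exact hf.hasFDerivAt.sub hg.hasFDerivAt

theorem hasGradientAt_inner_sub (c a x : F) : HasGradientAt (fun u => inner 𝕜 c (u - a)) c x := by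
  rw [hasGradientAt_iff_hasFDerivAt]
  exact (toDual 𝕜 F c).hasFDerivAt.comp x ((hasFDerivAt_id x).sub_const a)

end RCLike

section Real

variable {X : Type*} [NormedAddCommGroup X] [InnerProductSpace ℝ X]

theorem hasGradientAt_const_mul_norm_sub_sq [CompleteSpace X] (r : ℝ) (a x : X) :
    HasGradientAt (fun u => r * ‖u - a‖ ^ 2) ((2 * r) • (x - a)) x := by
  rw [hasGradientAt_iff_hasFDerivAt]
  have hsub : HasFDerivAt (· - a) (ContinuousLinearMap.id ℝ X) x := (hasFDerivAt_id x).sub_const a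
  refine (hsub.norm_sq.const_mul r).congr_fderiv ?_
  ext v
  simp only [toDual_apply_apply, real_inner_smul_left, smul_apply,
    ContinuousLinearMap.comp_apply, innerSL_apply_apply, ContinuousLinearMap.id_apply, smul_eq_mul]
  ring

theorem real_inner_le_mul_norm_sq_of_norm_le {u v : X} {L : ℝ} (h : ‖u‖ ≤ L * ‖v‖) :
    ⟪u, v⟫ ≤ L * ‖v‖ ^ 2 :=
  calc ⟪u, v⟫ ≤ ‖u‖ * ‖v‖ := real_inner_le_norm u v
    _ ≤ L * ‖v‖ * ‖v‖ := by gcongr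
    _ = L * ‖v‖ ^ 2 := by ring

end Real

theorem descent_direction_un_general
    {X : Type*} [NormedAddCommGroup X] [InnerProductSpace ℝ X] [FiniteDimensional ℝ X]
    (H : X → ℝ) (h : X → X) (hH : ∀ x : X, HasGradientAt H (h x) x)
    (F : X → ℝ) (f : X → X) (hF : ∀ x : X, HasGradientAt F (f x) x)
    (L : ℝ) (hLip : ∀ x y : X, ‖f x - f y‖ ≤ L * ‖x - y‖)
    (δt : ℝ)
    (M : X →L[ℝ] X)
    (un unm1 : X)
    (Hn Fn En : X → ℝ)
    (hHn : ∀ u : X, Hn u = H u + (1 / δt) * ‖u - un‖ ^ 2)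
    (hFn : ∀ u : X, Fn u = (1 / (3 * δt)) * ‖u - unm1‖ ^ 2 - F u
      - ⟪f un - f unm1, u - unm1⟫)
    (hEn : ∀ u : X, En u = Hn u - Fn u)
    (yn : X)
    (hopt : gradient Hn yn - gradient Fn un + M (yn - un) = 0) :
    ⟪gradient En yn, yn - un⟫
      ≤ -(2 / (3 * δt) - L) * ‖yn - un‖ ^ 2 - ⟪M (yn - un), yn - un⟫ := by
  have hFn_grad : ∀ x, HasGradientAt Fn
      ((2 * (1 / (3 * δt))) • (x - unm1) - f x - (f un - f unm1)) x := fun x =>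
    (((hasGradientAt_const_mul_norm_sub_sq _ unm1 x).sub (hF x)).sub
      (hasGradientAt_inner_sub _ unm1 x)).congr_of_eventuallyEq (.of_forall hFn)
  have hHn_grad : HasGradientAt Hn (h yn + (2 * (1 / δt)) • (yn - un)) yn :=
    ((hH yn).add (hasGradientAt_const_mul_norm_sub_sq _ un yn)).congr_of_eventuallyEq
      (.of_forall hHn)
  have hEn_grad : gradient En yn = gradient Fn un - gradient Fn yn - M (yn - un) := by
    rw [((hHn_grad.sub (hFn_grad yn)).congr_of_eventuallyEq (.of_forall hEn)).gradient,
      ← hHn_grad.gradient, ← (hFn_grad yn).gradient]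
    linear_combination (norm := module) hopt
  have hFn_grad_diff : gradient Fn un - gradient Fn yn
      = -(2 / (3 * δt)) • (yn - un) + (f yn - f un) := by
    rw [(hFn_grad un).gradient, (hFn_grad yn).gradient]
    module
  rw [hEn_grad, hFn_grad_diff, inner_sub_left, inner_add_left, real_inner_smul_left,
    real_inner_self_eq_norm_sq]
  linarith [real_inner_le_mul_norm_sq_of_norm_le (hLip yn un)]

/-- Descent direction: if `yⁿ` satisfies the optimality condition
`∇Hⁿ(yⁿ) - ∇Fⁿ(uⁿ) + M(yⁿ - uⁿ) = 0` and `0 < δt < 2/(3L)`, then with `dⁿ = yⁿ - uⁿ`,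
`⟪∇Eⁿ(yⁿ), dⁿ⟫ ≤ -(2/(3δt) - L)‖dⁿ‖² - ‖dⁿ‖²_M`. -/
theorem descent_direction_un
    {X : Type*} [NormedAddCommGroup X] [InnerProductSpace ℝ X] [FiniteDimensional ℝ X]
    (H : X → ℝ) (h : X → X) (hH : ∀ x : X, HasGradientAt H (h x) x)
    (hHconv : ConvexOn ℝ Set.univ H)
    (F : X → ℝ) (f : X → X) (hF : ∀ x : X, HasGradientAt F (f x) x)
    (L : ℝ) (hL : 0 < L) (hLip : ∀ x y : X, ‖f x - f y‖ ≤ L * ‖x - y‖)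
    (δt : ℝ) (hδt : 0 < δt) (hδt2 : δt < 2 / (3 * L))
    (M : X →L[ℝ] X) (hMsym : ∀ x y : X, ⟪M x, y⟫ = ⟪x, M y⟫)
    (hMpsd : ∀ x : X, 0 ≤ ⟪M x, x⟫)
    (un unm1 : X)
    (Hn Fn En : X → ℝ)
    (hHn : ∀ u : X, Hn u = H u + (1 / δt) * ‖u - un‖ ^ 2)
    (hFn : ∀ u : X, Fn u = (1 / (3 * δt)) * ‖u - unm1‖ ^ 2 - F u
      - ⟪f un - f unm1, u - unm1⟫)
    (hEn : ∀ u : X, En u = Hn u - Fn u)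
    (yn : X)
    (hopt : gradient Hn yn - gradient Fn un + M (yn - un) = 0) :
    ⟪gradient En yn, yn - un⟫
      ≤ -(2 / (3 * δt) - L) * ‖yn - un‖ ^ 2 - ⟪M (yn - un), yn - un⟫ :=
  descent_direction_un_general H h hH F f hF L hLip δt M un unm1 Hn Fn En hHn hFn hEn yn hopt
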